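/- arXiv:1110.2269 — 3 statements merged into one kernel-verified Lean document; each statement's English description precedes it below -/
import Mathlib

section
/- Let E be a k-coloured graph and C a complete, associative collection of squares. Composition of C-compatible coloured-graph morphisms (defined via unique extension) is associative: λ(μν) = (λμ)ν whenever s(λ) = r(μ) and s(μ) = r(ν). -/
namespace Paper


/-- A `k`-coloured (directed) graph. -/
structure ColouredGraph (k : ℕ) where
  V : Type
  E : Type
  r : E → V
  s : E → V
  c : E → Fin k

variable {k : ℕ}

/-- The model grid `E_{k,m}`: vertices `{n ≤ m}`, an edge of colour `i`
from `n + e_i` to `n` whenever `n + e_i ≤ m`. -/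
def grid (k : ℕ) (m : Fin k → ℕ) : ColouredGraph k where
  V := {n : Fin k → ℕ // n ≤ m}
  E := {p : (Fin k → ℕ) × Fin k // p.1 + Pi.single p.2 1 ≤ m}
  r e := ⟨e.1.1, le_trans (le_add_of_nonneg_right zero_le) e.2⟩
  s e := ⟨e.1.1 + Pi.single e.1.2 1, e.2⟩
  c e := e.1.2

/-- A coloured-graph morphism. -/
structure CGM (E F : ColouredGraph k) where
  onV : E.V → F.V
  onE : E.E → F.E
  r_comm : ∀ e, F.r (onE e) = onV (E.r e)
  s_comm : ∀ e, F.s (onE e) = onV (E.s e)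
  c_comm : ∀ e, F.c (onE e) = E.c e

/-- Composition of coloured-graph morphisms. -/
def CGM.compose {E F G : ColouredGraph k} (g : CGM F G) (f : CGM E F) : CGM E G where
  onV := g.onV ∘ f.onV
  onE := g.onE ∘ f.onE
  r_comm e := by simp [Function.comp, g.r_comm, f.r_comm]
  s_comm e := by simp [Function.comp, g.s_comm, f.s_comm]
  c_comm e := by simp [Function.comp, g.c_comm, f.c_comm]

/-- The range `λ(0)` of a coloured-graph morphism defined on a grid. -/
def gRng {E : ColouredGraph k} {m : Fin k → ℕ} (lam : CGM (grid k m) E) : E.V :=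
  lam.onV ⟨0, zero_le⟩

/-- The source `λ(m)` of a coloured-graph morphism defined on a grid. -/
def gSrc {E : ColouredGraph k} {m : Fin k → ℕ} (lam : CGM (grid k m) E) : E.V :=
  lam.onV ⟨m, le_refl m⟩

/-- The translated restriction `λ|*_{[p, p+m']}` of `λ : E_{k,M} → E`. -/
def restrictTo {E : ColouredGraph k} {M : Fin k → ℕ} (lam : CGM (grid k M) E)
    (p m' : Fin k → ℕ) (h : p + m' ≤ M) : CGM (grid k m') E where
  onV n := lam.onV ⟨p + n.1, le_trans (add_le_add le_rfl n.2) h⟩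
  onE e := lam.onE ⟨(p + e.1.1, e.1.2), by
    rw [add_assoc]; exact le_trans (add_le_add le_rfl e.2) h⟩
  r_comm e := lam.r_comm _
  s_comm e := by
    exact (lam.s_comm _).trans (congrArg lam.onV (Subtype.ext (add_assoc p e.1.1 _)))
  c_comm e := lam.c_comm _

/-- A coloured-graph morphism from some grid into `E`, bundled with its degree. -/
def MorphOf (E : ColouredGraph k) : Type := Σ m : Fin k → ℕ, CGM (grid k m) E

/-- The shape (abelianized colouring) of a finite path, as an element of `ℕ^k`. -/
def colourVec (E : ColouredGraph k) (x : List E.E) : Fin k → ℕ :=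
  (x.map (fun e => Pi.single (E.c e) 1)).sum

/-- A list of edges is a path when consecutive edges are composable. -/
def IsPathList (E : ColouredGraph k) (x : List E.E) : Prop :=
  x.Chain' (fun e f => E.s e = E.r f)

/-- `x` traverses `λ`: the edges of `x` match those of `λ` along the staircase
determined by the colour sequence of `x`. -/
def Traverses {E : ColouredGraph k} {m : Fin k → ℕ} (lam : CGM (grid k m) E)
    (x : List E.E) : Prop :=
  colourVec E x = m ∧ ∀ (l : ℕ) (hl : l < x.length),
    ∃ h : colourVec E (x.take l) + Pi.single (E.c (x.get ⟨l, hl⟩)) 1 ≤ m,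
      lam.onE ⟨(colourVec E (x.take l), E.c (x.get ⟨l, hl⟩)), h⟩ = x.get ⟨l, hl⟩

/-- A bundled grid morphism is a square when its degree is `e_i + e_j` with `i ≠ j`. -/
def IsSquarePair {E : ColouredGraph k} (φ : MorphOf E) : Prop :=
  ∃ i j : Fin k, i ≠ j ∧ φ.1 = Pi.single i 1 + Pi.single j 1

/-- A complete collection of squares. -/
def Complete (E : ColouredGraph k) (C : Set (MorphOf E)) : Prop :=
  (∀ φ ∈ C, IsSquarePair φ) ∧
  ∀ e f : E.E, E.s e = E.r f → E.c e ≠ E.c f →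
    ∃! φ : MorphOf E, φ ∈ C ∧ Traverses φ.2 [e, f]

/-- `CRel C e f f' e'` means `ef ∼_C f'e'`: the paths `ef` and `f'e'` traverse a
common square of `C`, with `f'` of the colour of `f` and `e'` of the colour of `e`. -/
def CRel (E : ColouredGraph k) (C : Set (MorphOf E)) (e f f' e' : E.E) : Prop :=
  E.c f' = E.c f ∧ E.c e' = E.c e ∧
  ∃ φ ∈ C, Traverses φ.2 [e, f] ∧ Traverses φ.2 [f', e']

/-- Associativity of a complete collection of squares. -/
def Associative (E : ColouredGraph k) (C : Set (MorphOf E)) : Prop :=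
  ∀ f g h f1 f2 g1 g2 h1 h2 f1' f2' g1' g2' h1' h2' : E.E,
    E.s f = E.r g → E.s g = E.r h →
    E.c f ≠ E.c g → E.c g ≠ E.c h → E.c f ≠ E.c h →
    CRel E C f g g1' f1' → CRel E C f1' h h1' f2' → CRel E C g1' h1' h2' g2' →
    CRel E C g h h1 g1 → CRel E C f h1 h2 f1 → CRel E C f1 g1 g2 f2 →
    f2 = f2' ∧ g2 = g2' ∧ h2 = h2'

/-- `λ` is `C`-compatible: every square occurring in `λ` belongs to `C`. -/
def CComp (E : ColouredGraph k) (C : Set (MorphOf E)) {M : Fin k → ℕ}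
    (lam : CGM (grid k M) E) : Prop :=
  ∀ (p : Fin k → ℕ) (i j : Fin k), i ≠ j →
    ∀ h : p + (Pi.single i 1 + Pi.single j 1) ≤ M,
      (⟨Pi.single i 1 + Pi.single j 1,
        restrictTo lam p (Pi.single i 1 + Pi.single j 1) h⟩ : MorphOf E) ∈ C

/-- A finite path in a coloured graph, remembering its range vertex (so that
length-zero paths are vertices). -/
structure FinPath (E : ColouredGraph k) where
  rng : E.V
  edges : List E.E
  chain : edges.Chain' (fun e f => E.s e = E.r f)
  head_rng : ∀ e ∈ edges.head?, E.r e = rng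

/-- Source vertex of a finite path. -/
def FinPath.src {E : ColouredGraph k} (x : FinPath E) : E.V :=
  (x.edges.getLast?).elim x.rng E.s

/-- One application of a commuting square: replace a consecutive bicoloured pair
by its `C`-equivalent pair. -/
def SwapStep (E : ColouredGraph k) (C : Set (MorphOf E)) (x y : List E.E) : Prop :=
  ∃ (l r : List E.E) (e f f' e' : E.E),
    x = l ++ e :: f :: r ∧ y = l ++ f' :: e' :: r ∧ CRel E C e f f' e'

/-- The relation on finite paths generating the equivalence `∼`. -/
def PathRel (E : ColouredGraph k) (C : Set (MorphOf E)) (x y : FinPath E) : Prop :=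
  x.rng = y.rng ∧ SwapStep E C x.edges y.edges



/-!
Both `(λμ)ν` and `λ(μν)` are `C`-compatible and restrict to `λ`, `μ` and `ν` on three consecutive
blocks, so it suffices that a `C`-compatible morphism `E_{k,a+b} → E` is determined by its
restrictions to `[0, a]` and `[a, a + b]`. These fix its edges along one monotone path from `0`
to `a + b`. By completeness a square of `C` is determined by either two-edge path through it, so
two `C`-compatible morphisms agreeing along a path agree along the path obtained by transposing
two consecutive colours; every edge of the grid lies on a path whose colour word is a
permutation of the given one.
-/

section Uniqueness

variable {E : ColouredGraph k} {C : Set (MorphOf E)}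

theorem CGM.ext {F G : ColouredGraph k} {f g : CGM F G} (hV : f.onV = g.onV)
    (hE : f.onE = g.onE) : f = g := by
  cases f; cases g; cases hV; cases hE; rfl

theorem restrictTo_restrictTo {M m m' p p' q : Fin k → ℕ} (lam : CGM (grid k M) E)
    (h : p + m ≤ M) (h' : p' + m' ≤ m) (hq : p + p' = q) :
    restrictTo (restrictTo lam p m h) p' m' h' =
      restrictTo lam q m' (by subst hq; rw [add_assoc]; exact (add_le_add le_rfl h').trans h) := by
  subst hq
  refine CGM.ext (funext fun x => ?_) (funext fun x => ?_)
  · exact congrArg lam.onV (Subtype.ext (add_assoc p p' x.1).symm)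
  · exact congrArg lam.onE (Subtype.ext (Prod.ext (add_assoc p p' x.1.1).symm rfl))

theorem CComp.restrict {M m : Fin k → ℕ} {lam : CGM (grid k M) E} (hlam : CComp E C lam)
    (p : Fin k → ℕ) (h : p + m ≤ M) : CComp E C (restrictTo lam p m h) := by
  intro q i j hij hq
  rw [restrictTo_restrictTo lam h hq rfl]
  exact hlam (p + q) i j hij _

theorem mk_restrictTo_zero {M M' : Fin k → ℕ} (lam : CGM (grid k M) E) (hM : M' = M)
    (h : 0 + M' ≤ M) : (⟨M', restrictTo lam 0 M' h⟩ : MorphOf E) = ⟨M, lam⟩ := by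
  subst hM
  suffices restrictTo lam 0 M' h = lam by rw [this]
  refine CGM.ext (funext fun x => ?_) (funext fun x => ?_)
  · exact congrArg lam.onV (Subtype.ext (zero_add x.1))
  · exact congrArg lam.onE (Subtype.ext (Prod.ext (zero_add x.1.1) rfl))

theorem eq_of_onE_eq_of_onV_zero {M : Fin k → ℕ} {lam lam' : CGM (grid k M) E}
    (hE : lam.onE = lam'.onE) (h0 : lam.onV ⟨0, zero_le⟩ = lam'.onV ⟨0, zero_le⟩) :
    lam = lam' := by
  refine CGM.ext (funext fun ⟨v, hv⟩ => ?_) hE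
  by_cases hv0 : v = 0
  · subst hv0; exact h0
  obtain ⟨i, hi⟩ := Function.ne_iff.mp hv0
  obtain ⟨r, rfl⟩ : ∃ r, v = r + Pi.single i 1 := by
    refine ⟨v - Pi.single i 1, (tsub_add_cancel_of_le ?_).symm⟩
    intro a
    rw [Pi.single_apply]
    split_ifs <;> simp_all [Nat.one_le_iff_ne_zero]
  exact (lam.s_comm ⟨(r, i), hv⟩).symm.trans
    ((congrArg E.s (congrFun hE _)).trans (lam'.s_comm _))

theorem traverses_square {i j : Fin k} (φ : CGM (grid k (Pi.single i 1 + Pi.single j 1)) E)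
    (h₀ : 0 + Pi.single i 1 ≤ Pi.single i 1 + Pi.single j 1)
    (h₁ : Pi.single i 1 + Pi.single j 1 ≤ Pi.single i 1 + Pi.single j 1) :
    Traverses φ [φ.onE ⟨(0, i), h₀⟩, φ.onE ⟨(Pi.single i 1, j), h₁⟩] := by
  have hci : E.c (φ.onE ⟨(0, i), h₀⟩) = i := φ.c_comm _
  have hcj : E.c (φ.onE ⟨(Pi.single i 1, j), h₁⟩) = j := φ.c_comm _
  refine ⟨by simp [colourVec, hci, hcj], fun l hl => ?_⟩
  match l, hl with
  | 0, _ => exact ⟨by simp [colourVec, hci],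
      congrArg φ.onE (Subtype.ext (by simp [colourVec, hci]))⟩
  | 1, _ => exact ⟨by simp [colourVec, hci, hcj],
      congrArg φ.onE (Subtype.ext (by simp [colourVec, hci, hcj]))⟩

theorem square_eq_of_agree (hC : Complete E C) {i j : Fin k} (hij : i ≠ j)
    {φ ψ : CGM (grid k (Pi.single i 1 + Pi.single j 1)) E} (hφ : ⟨_, φ⟩ ∈ C) (hψ : ⟨_, ψ⟩ ∈ C)
    (h₀ : ∀ h, φ.onE ⟨(0, i), h⟩ = ψ.onE ⟨(0, i), h⟩)
    (h₁ : ∀ h, φ.onE ⟨(Pi.single i 1, j), h⟩ = ψ.onE ⟨(Pi.single i 1, j), h⟩) : φ = ψ := by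
  have hb₀ : (0 : Fin k → ℕ) + Pi.single i 1 ≤ Pi.single i 1 + Pi.single j 1 := by simp
  have hb₁ : (Pi.single i 1 : Fin k → ℕ) + Pi.single j 1 ≤ Pi.single i 1 + Pi.single j 1 :=
    le_rfl
  have hsr : E.s (φ.onE ⟨(0, i), hb₀⟩) = E.r (φ.onE ⟨(Pi.single i 1, j), hb₁⟩) :=
    (φ.s_comm _).trans ((congrArg φ.onV (Subtype.ext (zero_add _))).trans (φ.r_comm _).symm)
  have hcc : E.c (φ.onE ⟨(0, i), hb₀⟩) ≠ E.c (φ.onE ⟨(Pi.single i 1, j), hb₁⟩) :=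
    fun h => hij ((φ.c_comm _).symm.trans (h.trans (φ.c_comm _)))
  obtain ⟨_, -, huniq⟩ := hC.2 _ _ hsr hcc
  have hφt := traverses_square φ hb₀ hb₁
  have hψt := traverses_square ψ hb₀ hb₁
  rw [← h₀, ← h₁] at hψt
  exact eq_of_heq (Sigma.ext_iff.mp ((huniq _ ⟨hφ, hφt⟩).trans (huniq _ ⟨hψ, hψt⟩).symm)).2

variable {M : Fin k → ℕ}

def AgreeAt (lam lam' : CGM (grid k M) E) (r : Fin k → ℕ) (i : Fin k) : Prop :=
  ∀ h : r + Pi.single i 1 ≤ M, lam.onE ⟨(r, i), h⟩ = lam'.onE ⟨(r, i), h⟩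

theorem AgreeAt.swap (hC : Complete E C) {lam lam' : CGM (grid k M) E} (hc : CComp E C lam)
    (hc' : CComp E C lam') {p : Fin k → ℕ} {i j : Fin k}
    (hb : p + (Pi.single i 1 + Pi.single j 1) ≤ M)
    (hi : AgreeAt lam lam' p i) (hj : AgreeAt lam lam' (p + Pi.single i 1) j) :
    AgreeAt lam lam' p j ∧ AgreeAt lam lam' (p + Pi.single j 1) i := by
  by_cases hij : i = j
  · subst hij; exact ⟨hi, hj⟩
  have hsq : restrictTo lam p _ hb = restrictTo lam' p _ hb :=
    square_eq_of_agree hC hij (hc p i j hij hb) (hc' p i j hij hb) (fun _ => hi _) (fun _ => hj _)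
  exact ⟨fun _ => congrArg (·.onE ⟨(0, j), by simp⟩) hsq,
    fun _ => congrArg (·.onE ⟨(Pi.single j 1, i), (add_comm _ _).le⟩) hsq⟩

def countVec (w : List (Fin k)) : Fin k → ℕ := fun a => w.count a

theorem countVec_nil : countVec ([] : List (Fin k)) = 0 := rfl

theorem countVec_cons (a : Fin k) (w : List (Fin k)) :
    countVec (a :: w) = Pi.single a 1 + countVec w := by
  funext b
  simp only [countVec, List.count_cons, beq_iff_eq, Pi.add_apply, Pi.single_apply]
  split_ifs <;> simp_all [add_comm]

theorem countVec_append (u v : List (Fin k)) : countVec (u ++ v) = countVec u + countVec v := by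
  funext a
  simp [countVec]

theorem countVec_eq_iff_perm {u v : List (Fin k)} : countVec u = countVec v ↔ u.Perm v :=
  funext_iff.trans List.perm_iff_count.symm

theorem exists_countVec_eq (v : Fin k → ℕ) : ∃ w, countVec w = v := by
  refine ⟨(Finsupp.toMultiset (Finsupp.equivFunOnFinite.symm v)).toList, funext fun a => ?_⟩
  rw [countVec, ← Multiset.coe_count, Multiset.coe_toList, Finsupp.count_toMultiset]
  rfl

def AgreeAlong (lam lam' : CGM (grid k M) E) : (Fin k → ℕ) → List (Fin k) → Prop
  | _, [] => True
  | p, i :: w => AgreeAt lam lam' p i ∧ AgreeAlong lam lam' (p + Pi.single i 1) w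

theorem agreeAlong_append {lam lam' : CGM (grid k M) E} (u v : List (Fin k)) (p : Fin k → ℕ) :
    AgreeAlong lam lam' p (u ++ v) ↔
      AgreeAlong lam lam' p u ∧ AgreeAlong lam lam' (p + countVec u) v := by
  induction u generalizing p with
  | nil => simp [AgreeAlong, countVec_nil]
  | cons a u ih => simp [AgreeAlong, ih, countVec_cons, add_assoc, and_assoc]

theorem AgreeAlong.perm (hC : Complete E C) {lam lam' : CGM (grid k M) E} (hc : CComp E C lam)
    (hc' : CComp E C lam') {u v : List (Fin k)} (huv : u.Perm v) {p : Fin k → ℕ}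
    (hb : p + countVec u ≤ M) (hu : AgreeAlong lam lam' p u) : AgreeAlong lam lam' p v := by
  induction huv generalizing p with
  | nil => trivial
  | cons a _ ih =>
    rw [countVec_cons, ← add_assoc] at hb
    exact ⟨hu.1, ih hb hu.2⟩
  | swap a b w =>
    obtain ⟨hb', ha', hw⟩ := hu
    rw [countVec_cons, countVec_cons] at hb
    have hsq := hb'.swap hC hc hc'
      ((add_le_add_right (by rw [← add_assoc]; exact le_self_add) p).trans hb) ha'
    exact ⟨hsq.1, hsq.2, by rwa [add_right_comm]⟩
  | trans h₁ _ ih₁ ih₂ => exact ih₂ (countVec_eq_iff_perm.mpr h₁ ▸ hb) (ih₁ hb hu)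

theorem agreeAlong_of_restrictTo_eq {lam lam' : CGM (grid k M) E} {p m : Fin k → ℕ}
    {h : p + m ≤ M} (he : restrictTo lam p m h = restrictTo lam' p m h) (u : List (Fin k))
    (r : Fin k → ℕ) (hr : r + countVec u ≤ m) : AgreeAlong lam lam' (p + r) u := by
  induction u generalizing r with
  | nil => trivial
  | cons i u ih =>
    rw [countVec_cons, ← add_assoc] at hr
    refine ⟨fun _ => congrArg (·.onE ⟨(r, i), le_self_add.trans hr⟩) he, ?_⟩
    rw [add_assoc]
    exact ih _ hr

theorem onE_eq_of_agreeAlong (hC : Complete E C) {lam lam' : CGM (grid k M) E}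
    (hc : CComp E C lam) (hc' : CComp E C lam') {w : List (Fin k)} (hw : countVec w = M)
    (hagree : AgreeAlong lam lam' 0 w) : lam.onE = lam'.onE := by
  funext ⟨⟨r, i⟩, hr⟩
  obtain ⟨u, hu⟩ := exists_countVec_eq r
  obtain ⟨u', hu'⟩ := exists_countVec_eq (M - (r + Pi.single i 1))
  have hcount : countVec w = countVec (u ++ i :: u') := by
    rw [countVec_append, countVec_cons, hu, hu', ← add_assoc, add_tsub_cancel_of_le hr, hw]
  have hpath := hagree.perm hC hc hc' (countVec_eq_iff_perm.mp hcount) (by rw [zero_add, hw])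
  rw [agreeAlong_append, zero_add, hu] at hpath
  exact hpath.2.1 hr

theorem eq_of_restrictTo_eq (hC : Complete E C) {a b : Fin k → ℕ}
    {lam lam' : CGM (grid k (a + b)) E} (hc : CComp E C lam) (hc' : CComp E C lam')
    (h₁ : restrictTo lam 0 a (by rw [zero_add]; exact le_self_add) =
      restrictTo lam' 0 a (by rw [zero_add]; exact le_self_add))
    (h₂ : restrictTo lam a b le_rfl = restrictTo lam' a b le_rfl) : lam = lam' := by
  obtain ⟨u, hu⟩ := exists_countVec_eq a
  obtain ⟨v, hv⟩ := exists_countVec_eq b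
  have hagree : AgreeAlong lam lam' 0 (u ++ v) := by
    refine (agreeAlong_append u v 0).mpr ⟨?_, ?_⟩
    · simpa using agreeAlong_of_restrictTo_eq h₁ u 0 (by rw [zero_add, hu])
    · simpa [hu] using agreeAlong_of_restrictTo_eq h₂ v 0 (by rw [zero_add, hv])
  refine eq_of_onE_eq_of_onV_zero ?_ (congrArg (·.onV ⟨0, zero_le⟩) h₁)
  exact onE_eq_of_agreeAlong hC hc hc' (by rw [countVec_append, hu, hv]) hagree

end Uniqueness

-- `p = λμ`, `q = μν`, `A = (λμ)ν` and `B = λ(μν)` are given through their restrictions.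
/-- Composition of `C`-compatible coloured-graph morphisms (defined by unique
extension) is associative: `(λμ)ν = λ(μν)`. Here `p = λμ`, `q = μν`,
`A = (λμ)ν` and `B = λ(μν)` are characterised by their restrictions. -/
theorem composition_associative {k : ℕ} {E : ColouredGraph k} {C : Set (MorphOf E)}
    (hC : Complete E C) {l m n : Fin k → ℕ}
    (lam : CGM (grid k l) E) (μ : CGM (grid k m) E) (ν : CGM (grid k n) E)
    (p : CGM (grid k (l + m)) E) (hp : CComp E C p)
    (hp1 : restrictTo p 0 l (by rw [zero_add]; exact le_self_add) = lam)
    (hp2 : restrictTo p l m (le_refl (l + m)) = μ)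
    (q : CGM (grid k (m + n)) E)
    (hq1 : restrictTo q 0 m (by rw [zero_add]; exact le_self_add) = μ)
    (hq2 : restrictTo q m n (le_refl (m + n)) = ν)
    (A : CGM (grid k (l + m + n)) E) (hA' : CComp E C A)
    (hA1 : restrictTo A 0 (l + m) (by rw [zero_add]; exact le_self_add) = p)
    (hA2 : restrictTo A (l + m) n (le_refl (l + m + n)) = ν)
    (B : CGM (grid k (l + (m + n))) E) (hB : CComp E C B)
    (hB1 : restrictTo B 0 l (by rw [zero_add]; exact le_self_add) = lam)
    (hB2 : restrictTo B l (m + n) (le_refl (l + (m + n))) = q) :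
    (⟨l + m + n, A⟩ : MorphOf E) = ⟨l + (m + n), B⟩ := by
  -- `B` transported to the grid `E_{k,l+m+n}`
  set B' := restrictTo B 0 (l + m + n) (by rw [zero_add, add_assoc])
  have hB' : CComp E C B' := hB.restrict _ _
  have hB'p : restrictTo B' 0 (l + m) (by rw [zero_add]; exact le_self_add) = p := by
    refine eq_of_restrictTo_eq hC (hB'.restrict _ _) hp ?_ ?_
    · rw [hp1, restrictTo_restrictTo _ _ _ (zero_add 0), restrictTo_restrictTo _ _ _ (zero_add 0)]
      exact hB1
    · rw [hp2, ← hq1, ← hB2, restrictTo_restrictTo _ _ _ (zero_add 0),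
        restrictTo_restrictTo _ _ _ (zero_add l), restrictTo_restrictTo _ _ _ (add_zero l)]
  have hB'ν : restrictTo B' (l + m) n le_rfl = ν := by
    rw [← hq2, ← hB2, restrictTo_restrictTo _ _ _ (zero_add (l + m)),
      restrictTo_restrictTo _ _ _ rfl]
  have hAB' : A = B' :=
    eq_of_restrictTo_eq hC hA' hB' (hA1.trans hB'p.symm) (hA2.trans hB'ν.symm)
  rw [hAB', mk_restrictTo_zero B (add_assoc l m n)]

end Paper
end

section
/- Let Λ be an aperiodic k-graph with no sources. For every vertex v ∈ Λ^0 and every l ∈ ℕ^k, there exists λ ∈ Λ with r(λ) = v and d(λ) ≥ l such that whenever α, β ∈ Λv are distinct paths with d(α), d(β) ≤ l, the initial segments of αλ and βλ of degree d(λ) are distinct: (αλ)(0, d(λ)) ≠ (βλ)(0, d(λ)). -/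
namespace Paper


/-- A `k`-graph structure on object type `Obj` and morphism type `Hom`:
a countable category with a degree functor to `ℕ^k` satisfying the
unique factorisation property.  `comp μ ν` is the composite "μ then ν",
meaningful when `src μ = rng ν`. -/
structure KGraph (k : ℕ) (Obj Hom : Type) where
  src : Hom → Obj
  rng : Hom → Obj
  comp : Hom → Hom → Hom
  idm : Obj → Hom
  d : Hom → Fin k → ℕ
  countObj : Countable Obj
  countHom : Countable Hom
  src_comp : ∀ μ ν, src μ = rng ν → src (comp μ ν) = src ν
  rng_comp : ∀ μ ν, src μ = rng ν → rng (comp μ ν) = rng μ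
  comp_assoc : ∀ l μ ν, src l = rng μ → src μ = rng ν →
    comp (comp l μ) ν = comp l (comp μ ν)
  src_idm : ∀ v, src (idm v) = v
  rng_idm : ∀ v, rng (idm v) = v
  comp_idm : ∀ μ, comp μ (idm (src μ)) = μ
  idm_comp : ∀ μ, comp (idm (rng μ)) μ = μ
  d_comp : ∀ μ ν, src μ = rng ν → d (comp μ ν) = d μ + d ν
  d_idm : ∀ v, d (idm v) = 0
  factor : ∀ (lam : Hom) (m n : Fin k → ℕ), d lam = m + n →
    ∃! p : Hom × Hom, src p.1 = rng p.2 ∧ comp p.1 p.2 = lam ∧ d p.1 = m ∧ d p.2 = n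

variable {k : ℕ} {Obj Hom : Type}

/-- `IsSegment Λ lam seg p q` says that `seg = lam(p,q)`, i.e. `seg` is the middle
factor of `lam` in a factorisation `lam = a ⬝ seg ⬝ b` with `d a = p`, `d seg = q - p`. -/
def IsSegment (Λ : KGraph k Obj Hom) (lam seg : Hom) (p q : Fin k → ℕ) : Prop :=
  ∃ a b : Hom, Λ.src a = Λ.rng seg ∧ Λ.src seg = Λ.rng b ∧
    Λ.comp a (Λ.comp seg b) = lam ∧ Λ.d a = p ∧ Λ.d seg = q - p

/-- Aperiodicity in the finite-path formulation of Robertson–Sims. -/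
def Aperiodic (Λ : KGraph k Obj Hom) : Prop :=
  ∀ (v : Obj) (m n : Fin k → ℕ), m ≠ n → ∃ lam : Hom,
    Λ.rng lam = v ∧ m ⊔ n ≤ Λ.d lam ∧
    ∀ s1 s2 : Hom, IsSegment Λ lam s1 m (m + (Λ.d lam - (m ⊔ n))) →
      IsSegment Λ lam s2 n (n + (Λ.d lam - (m ⊔ n))) → s1 ≠ s2

def NoSources (Λ : KGraph k Obj Hom) : Prop :=
  ∀ (v : Obj) (i : Fin k), ∃ h : Hom, Λ.rng h = v ∧ Λ.d h = Pi.single i 1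

def RowFinite (Λ : KGraph k Obj Hom) : Prop :=
  ∀ (v : Obj) (i : Fin k), {h : Hom | Λ.rng h = v ∧ Λ.d h = Pi.single i 1}.Finite

def Cofinal (Λ : KGraph k Obj Hom) : Prop :=
  ∀ v w : Obj, ∃ n : Fin k → ℕ, ∀ lam : Hom, Λ.rng lam = w → Λ.d lam = n →
    ∃ μ : Hom, Λ.rng μ = v ∧ Λ.src μ = Λ.src lam

/-- A degree-preserving functor between `k`-graphs. -/
structure KFunctor {O H O' H' : Type} (Λ : KGraph k O H) (Γ : KGraph k O' H') where
  onObj : O → O'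
  onHom : H → H'
  rng_comm : ∀ h, Γ.rng (onHom h) = onObj (Λ.rng h)
  src_comm : ∀ h, Γ.src (onHom h) = onObj (Λ.src h)
  idm_comm : ∀ v, onHom (Λ.idm v) = Γ.idm (onObj v)
  comp_comm : ∀ μ ν, Λ.src μ = Λ.rng ν → onHom (Λ.comp μ ν) = Γ.comp (onHom μ) (onHom ν)
  d_comm : ∀ h, Γ.d (onHom h) = Λ.d h

/-- An infinite path in a `k`-graph: a `k`-graph morphism from `Ω_k`. -/
structure InfPath (Λ : KGraph k Obj Hom) where
  vert : (Fin k → ℕ) → Obj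
  seg : ∀ p q : Fin k → ℕ, p ≤ q → Hom
  rng_seg : ∀ p q h, Λ.rng (seg p q h) = vert p
  src_seg : ∀ p q h, Λ.src (seg p q h) = vert q
  d_seg : ∀ p q h, Λ.d (seg p q h) = q - p
  comp_seg : ∀ p q r (h1 : p ≤ q) (h2 : q ≤ r),
    Λ.comp (seg p q h1) (seg q r h2) = seg p r (h1.trans h2)

/-- The shift `σ^p` on infinite paths. -/
def InfPath.shift (Λ : KGraph k Obj Hom) (p : Fin k → ℕ) (x : InfPath Λ) : InfPath Λ where
  vert q := x.vert (p + q)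
  seg q r h := x.seg (p + q) (p + r) (add_le_add le_rfl h)
  rng_seg q r h := x.rng_seg _ _ _
  src_seg q r h := x.src_seg _ _ _
  d_seg q r h := by
    rw [x.d_seg]
    funext i
    simp [Nat.add_sub_add_left]
  comp_seg q r t h1 h2 := x.comp_seg _ _ _ _ _


/-!
For each pair `m ≠ n` with `m, n ≤ l`, aperiodicity gives a path `μ` with
`μ(m, m + d μ - m ∨ n) ≠ μ(n, n + d μ - m ∨ n)`. Concatenate these witnesses and a final path
of degree `l` into `λ`. Since every witness is followed by a path of degree at least `l`, the
segments `λ(m, m + d λ - l)` and `λ(n, n + d λ - l)` contain the two distinct segments of the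
witness for `(m, n)` at the same place, so they differ.
If `(αλ)(0, d λ) = (βλ)(0, d λ)` and `M = d α ∨ d β`, the parts of this common path beyond `M`
give `λ(M - d α, d λ - d α) = λ(M - d β, d λ - d β)`. This contradicts the construction unless
`d α = d β`, and then unique factorisation forces `α = β`.
-/

namespace KGraph

variable (Λ : KGraph k Obj Hom) {a b a' b' : Hom}

theorem comp_inj (hab : Λ.src a = Λ.rng b) (ha'b' : Λ.src a' = Λ.rng b')
    (h : Λ.comp a b = Λ.comp a' b') (hd : Λ.d a = Λ.d a') : a = a' ∧ b = b' := by
  have hdb : Λ.d b = Λ.d b' := by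
    have := Λ.d_comp a b hab
    rw [h, Λ.d_comp a' b' ha'b', hd] at this
    exact (add_left_cancel this).symm
  exact Prod.mk.inj <| (Λ.factor _ (Λ.d a) (Λ.d b) (Λ.d_comp a b hab)).unique
    ⟨hab, rfl, rfl, rfl⟩ ⟨ha'b', h.symm, hd.symm, hdb.symm⟩

theorem exists_path_of_degree (hNS : NoSources Λ) (n : Fin k → ℕ) (w : Obj) :
    ∃ h : Hom, Λ.rng h = w ∧ Λ.d h = n := by
  let D : AddSubmonoid (Fin k → ℕ) :=
    { carrier := {n | ∀ w, ∃ h : Hom, Λ.rng h = w ∧ Λ.d h = n}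
      zero_mem' := fun w => ⟨Λ.idm w, Λ.rng_idm w, Λ.d_idm w⟩
      add_mem' := by
        rintro m n hm hn w
        obtain ⟨g, hg, hgd⟩ := hm w
        obtain ⟨h, hh, hhd⟩ := hn (Λ.src g)
        exact ⟨Λ.comp g h, by rw [Λ.rng_comp g h hh.symm, hg],
          by rw [Λ.d_comp g h hh.symm, hgd, hhd]⟩ }
  have hn : n ∈ D := by
    rw [← Finset.univ_sum_single n]
    refine D.sum_mem fun i _ => ?_
    rw [← mul_one (n i), ← smul_eq_mul, Pi.single_smul]
    exact D.nsmul_mem (fun w => hNS w i) _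
  exact hn w

end KGraph

section Segments

variable {Λ : KGraph k Obj Hom} {lam s t u x y : Hom} {p q a b : Fin k → ℕ}

theorem IsSegment.d_eq (h : IsSegment Λ lam s p q) : Λ.d s = q - p := by
  obtain ⟨_, _, _, _, _, _, h⟩ := h
  exact h

theorem IsSegment.unique (h : IsSegment Λ lam s p q) (h' : IsSegment Λ lam t p q) : s = t := by
  obtain ⟨a, b, ha, hb, hlam, hda, hds⟩ := h
  obtain ⟨a', b', ha', hb', hlam', hda', hdt⟩ := h'
  have hsb := (Λ.comp_inj (by rwa [Λ.rng_comp s b hb]) (by rwa [Λ.rng_comp t b' hb'])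
    (hlam.trans hlam'.symm) (hda.trans hda'.symm)).2
  exact (Λ.comp_inj hb hb' hsb (hds.trans hdt.symm)).1

theorem exists_isSegment (hpq : p ≤ q) (hq : q ≤ Λ.d lam) : ∃ s, IsSegment Λ lam s p q := by
  have hp := hpq.trans hq
  obtain ⟨⟨a, c⟩, ⟨hac, hlam, hda, hdc⟩, -⟩ :=
    Λ.factor lam p (Λ.d lam - p) (add_tsub_cancel_of_le hp).symm
  have hdc' : Λ.d c = (q - p) + (Λ.d lam - q) := by
    rw [hdc, add_comm, tsub_add_tsub_cancel hq hpq]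
  obtain ⟨⟨s, b⟩, ⟨hsb, rfl, hds, -⟩, -⟩ := Λ.factor c (q - p) (Λ.d lam - q) hdc'
  exact ⟨s, a, b, by rwa [Λ.rng_comp s b hsb] at hac, hsb, hlam, hda, hds⟩

theorem IsSegment.trans (hs : IsSegment Λ lam s p q) (ht : IsSegment Λ s t a b) :
    IsSegment Λ lam t (p + a) (p + b) := by
  obtain ⟨c, d, hc, hd, rfl, hdc, -⟩ := hs
  obtain ⟨c', d', hc', hd', rfl, hdc', hdt⟩ := ht
  have htd' : Λ.rng (Λ.comp t d') = Λ.rng t := Λ.rng_comp t d' hd'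
  have hcc' : Λ.src c = Λ.rng c' := by
    rwa [Λ.rng_comp c' _ (by rwa [htd'])] at hc
  have hd'd : Λ.src d' = Λ.rng d := by
    rwa [Λ.src_comp c' _ (by rwa [htd']), Λ.src_comp t d' hd'] at hd
  refine ⟨Λ.comp c c', Λ.comp d' d, by rwa [Λ.src_comp c c' hcc'],
    by rwa [Λ.rng_comp d' d hd'd], ?_, by rw [Λ.d_comp c c' hcc', hdc, hdc'],
    by rw [hdt, add_tsub_add_eq_tsub_left]⟩
  rw [Λ.comp_assoc c c' _ hcc' (by rwa [Λ.rng_comp t _ (by rwa [Λ.rng_comp d' d hd'd])]),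
    ← Λ.comp_assoc t d' d hd' hd'd,
    Λ.comp_assoc c' (Λ.comp t d') d (by rwa [htd']) (by rwa [Λ.src_comp t d' hd'])]

theorem IsSegment.isSegment_of_add (ht : IsSegment Λ lam t a b)
    (hs : IsSegment Λ lam s (a + p) (a + q)) (hpq : p ≤ q) (hq : q ≤ Λ.d t) :
    IsSegment Λ t s p q := by
  obtain ⟨u, hu⟩ := exists_isSegment hpq hq
  rwa [← (ht.trans hu).unique hs]

theorem isSegment_comp_left (hxy : Λ.src x = Λ.rng y) :
    IsSegment Λ (Λ.comp x y) x 0 (Λ.d x) :=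
  ⟨Λ.idm (Λ.rng x), y, Λ.src_idm _, hxy, by rw [← Λ.rng_comp x y hxy, Λ.idm_comp], Λ.d_idm _,
    (tsub_zero _).symm⟩

theorem isSegment_comp_right (hxy : Λ.src x = Λ.rng y) :
    IsSegment Λ (Λ.comp x y) y (Λ.d x) (Λ.d x + Λ.d y) :=
  ⟨x, Λ.idm (Λ.src y), hxy, (Λ.rng_idm _).symm, by rw [Λ.comp_idm], rfl,
    (add_tsub_cancel_left _ _).symm⟩

end Segments

/-- `lam(m, m + r) = lam(n, n + r)`. -/
def SegmentsAgree (Λ : KGraph k Obj Hom) (lam : Hom) (m n r : Fin k → ℕ) : Prop :=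
  ∃ s, IsSegment Λ lam s m (m + r) ∧ IsSegment Λ lam s n (n + r)

section SegmentsAgree

variable {Λ : KGraph k Obj Hom} {lam t x y : Hom} {m n r r' a b : Fin k → ℕ}

theorem Aperiodic.exists_not_segmentsAgree (hAp : Aperiodic Λ) (v : Obj) (hmn : m ≠ n) :
    ∃ lam, Λ.rng lam = v ∧ m ⊔ n ≤ Λ.d lam ∧
      ¬ SegmentsAgree Λ lam m n (Λ.d lam - m ⊔ n) := by
  obtain ⟨lam, hv, hle, hne⟩ := hAp v m n hmn
  exact ⟨lam, hv, hle, fun ⟨s, hm, hn⟩ => hne s s hm hn rfl⟩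

theorem SegmentsAgree.shift (h : SegmentsAgree Λ lam m n r) (har : a + r' ≤ r) :
    SegmentsAgree Λ lam (m + a) (n + a) r' := by
  obtain ⟨s, hm, hn⟩ := h
  obtain ⟨u, hu⟩ := exists_isSegment (lam := s) (le_self_add (a := a) (b := r'))
    (by rwa [hm.d_eq, add_tsub_cancel_left])
  exact ⟨u, by simpa only [add_assoc] using hm.trans hu, by simpa only [add_assoc] using hn.trans hu⟩

theorem SegmentsAgree.mono (h : SegmentsAgree Λ lam m n r) (hr : r' ≤ r) :
    SegmentsAgree Λ lam m n r' := by
  simpa only [add_zero] using h.shift (a := 0) (by rwa [zero_add])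

theorem SegmentsAgree.of_isSegment (h : SegmentsAgree Λ lam (a + m) (a + n) r)
    (ht : IsSegment Λ lam t a b) (hm : m + r ≤ Λ.d t) (hn : n + r ≤ Λ.d t) :
    SegmentsAgree Λ t m n r := by
  obtain ⟨s, hsm, hsn⟩ := h
  rw [add_assoc] at hsm hsn
  exact ⟨s, ht.isSegment_of_add hsm le_self_add hm, ht.isSegment_of_add hsn le_self_add hn⟩

theorem SegmentsAgree.of_comp_left (hxy : Λ.src x = Λ.rng y)
    (h : SegmentsAgree Λ (Λ.comp x y) m n r') (hr : r ≤ r') (hm : m + r ≤ Λ.d x)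
    (hn : n + r ≤ Λ.d x) : SegmentsAgree Λ x m n r :=
  (by simpa only [zero_add] using h.mono hr : SegmentsAgree Λ _ (0 + m) (0 + n) r).of_isSegment
    (isSegment_comp_left hxy) hm hn

theorem SegmentsAgree.of_comp_right (hxy : Λ.src x = Λ.rng y) {l : Fin k → ℕ}
    (h : SegmentsAgree Λ (Λ.comp x y) m n (Λ.d (Λ.comp x y) - l)) (hl : l ≤ Λ.d y)
    (hm : m ≤ l) (hn : n ≤ l) : SegmentsAgree Λ y m n (Λ.d y - l) := by
  rw [Λ.d_comp x y hxy, add_tsub_assoc_of_le hl] at h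
  have h' := h.shift (a := Λ.d x) le_rfl
  rw [add_comm m, add_comm n] at h'
  have hle : ∀ {j}, j ≤ l → j + (Λ.d y - l) ≤ Λ.d y := fun hj =>
    (add_le_add_left hj _).trans (add_tsub_cancel_of_le hl).le
  exact h'.of_isSegment (isSegment_comp_right hxy) (hle hm) (hle hn)

end SegmentsAgree

section Construction

variable {Λ : KGraph k Obj Hom}

theorem exists_forall_not_segmentsAgree (hAp : Aperiodic Λ) (hNS : NoSources Λ)
    (l : Fin k → ℕ) (S : Finset ((Fin k → ℕ) × (Fin k → ℕ)))
    (hS : ∀ mn ∈ S, mn.1 ≤ l ∧ mn.2 ≤ l ∧ mn.1 ≠ mn.2) (w : Obj) :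
    ∃ lam, Λ.rng lam = w ∧ l ≤ Λ.d lam ∧
      ∀ mn ∈ S, ¬ SegmentsAgree Λ lam mn.1 mn.2 (Λ.d lam - l) := by
  induction S using Finset.induction_on generalizing w with
  | empty =>
    obtain ⟨lam, hw, hd⟩ := Λ.exists_path_of_degree hNS l w
    exact ⟨lam, hw, hd.ge, by simp⟩
  | insert mn S _ ih =>
    obtain ⟨hm, hn, hmn⟩ := hS mn (Finset.mem_insert_self mn S)
    obtain ⟨μ, hμw, hμd, hμ⟩ := hAp.exists_not_segmentsAgree w hmn
    obtain ⟨lam, hlam, hl, hsep⟩ :=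
      ih (fun mn' h => hS mn' (Finset.mem_insert_of_mem h)) (Λ.src μ)
    have hμlam : Λ.src μ = Λ.rng lam := hlam.symm
    refine ⟨Λ.comp μ lam, by rw [Λ.rng_comp μ lam hμlam, hμw],
      by rw [Λ.d_comp μ lam hμlam]; exact le_add_left hl, ?_⟩
    rintro mn' hmn'
    rcases Finset.mem_insert.1 hmn' with rfl | hmn'
    · have hle : ∀ {j}, j ≤ mn'.1 ⊔ mn'.2 → j + (Λ.d μ - mn'.1 ⊔ mn'.2) ≤ Λ.d μ := fun hj =>
        (add_le_add_left hj _).trans (add_tsub_cancel_of_le hμd).le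
      refine fun h => hμ (h.of_comp_left hμlam ?_ (hle le_sup_left) (hle le_sup_right))
      rw [Λ.d_comp μ lam hμlam, add_tsub_assoc_of_le hl]
      exact tsub_le_self.trans le_self_add
    · obtain ⟨hm', hn', -⟩ := hS mn' (Finset.mem_insert_of_mem hmn')
      exact fun h => hsep mn' hmn' (h.of_comp_right hμlam hl hm' hn')

end Construction

section InitialSegments

variable {Λ : KGraph k Obj Hom} {lam s x y x' y' : Hom} {q : Fin k → ℕ}

theorem eq_of_isSegment_comp (hxy : Λ.src x = Λ.rng y) (hx'y' : Λ.src x' = Λ.rng y')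
    (hs : IsSegment Λ (Λ.comp x y) s 0 q) (hs' : IsSegment Λ (Λ.comp x' y') s 0 q)
    (hd : Λ.d x = Λ.d x') (hq : Λ.d x ≤ q) : x = x' := by
  obtain ⟨u, hu⟩ :=
    exists_isSegment (lam := s) (p := 0) (q := Λ.d x) zero_le (by rwa [hs.d_eq, tsub_zero])
  have hxu := (isSegment_comp_left hxy).unique (by simpa only [zero_add] using hs.trans hu)
  have hx'u := (isSegment_comp_left hx'y').unique
    (by simpa only [zero_add, hd] using hs'.trans hu)
  exact hxu.trans hx'u.symm

theorem segmentsAgree_of_isSegment_comp {α β : Hom} (hα : Λ.src α = Λ.rng lam)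
    (hβ : Λ.src β = Λ.rng lam) (hA : IsSegment Λ (Λ.comp α lam) s 0 (Λ.d lam))
    (hB : IsSegment Λ (Λ.comp β lam) s 0 (Λ.d lam)) (hM : Λ.d α ⊔ Λ.d β ≤ Λ.d lam) :
    SegmentsAgree Λ lam (Λ.d α ⊔ Λ.d β - Λ.d α) (Λ.d α ⊔ Λ.d β - Λ.d β)
      (Λ.d lam - Λ.d α ⊔ Λ.d β) := by
  set M := Λ.d α ⊔ Λ.d β
  obtain ⟨u, hu⟩ := exists_isSegment (lam := s) hM (by rw [hA.d_eq, tsub_zero])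
  have tail_isSegment : ∀ {x}, Λ.src x = Λ.rng lam → Λ.d x ≤ M →
      IsSegment Λ (Λ.comp x lam) s 0 (Λ.d lam) →
      IsSegment Λ lam u (M - Λ.d x) (M - Λ.d x + (Λ.d lam - M)) := by
    intro x hx hxM hs
    have h : IsSegment Λ (Λ.comp x lam) u (Λ.d x + (M - Λ.d x))
        (Λ.d x + (M - Λ.d x + (Λ.d lam - M))) := by
      rw [← add_assoc, add_tsub_cancel_of_le hxM, add_tsub_cancel_of_le hM]
      simpa only [zero_add] using hs.trans hu
    refine (isSegment_comp_right hx).isSegment_of_add h le_self_add ?_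
    rw [add_comm, tsub_add_tsub_cancel hM hxM]
    exact tsub_le_self
  exact ⟨u, tail_isSegment hα le_sup_left hA, tail_isSegment hβ le_sup_right hB⟩

end InitialSegments

/-- In an aperiodic `k`-graph with no sources: for every vertex `v` and
`l ∈ ℕ^k` there is `λ ∈ vΛ` with `d(λ) ≥ l` such that distinct `α, β ∈ Λv`
with `d(α), d(β) ≤ l` have distinct initial segments `(αλ)(0,d(λ))` and
`(βλ)(0,d(λ))`. -/
theorem exists_separating_path {k : ℕ} {Obj Hom : Type} (Λ : KGraph k Obj Hom)
    (hAp : Aperiodic Λ) (hNS : NoSources Λ) (v : Obj) (l : Fin k → ℕ) :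
    ∃ lam : Hom, Λ.rng lam = v ∧ l ≤ Λ.d lam ∧
      ∀ α β : Hom, Λ.src α = v → Λ.src β = v →
        Λ.d α ≤ l → Λ.d β ≤ l → α ≠ β →
        ∀ iniA iniB : Hom,
          IsSegment Λ (Λ.comp α lam) iniA 0 (Λ.d lam) →
          IsSegment Λ (Λ.comp β lam) iniB 0 (Λ.d lam) →
          iniA ≠ iniB := by
  obtain ⟨lam, hv, hl, hsep⟩ := exists_forall_not_segmentsAgree hAp hNS l
    (Finset.Iic l).offDiag (fun mn h => by
      obtain ⟨h1, h2, h⟩ := Finset.mem_offDiag.1 h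
      exact ⟨Finset.mem_Iic.1 h1, Finset.mem_Iic.1 h2, h⟩) v
  refine ⟨lam, hv, hl, ?_⟩
  rintro α β hα hβ hαl hβl hne s _ hA hB rfl
  rw [← hv] at hα hβ
  by_cases hd : Λ.d α = Λ.d β
  · exact hne (eq_of_isSegment_comp hα hβ hA hB hd (hαl.trans hl))
  · set M := Λ.d α ⊔ Λ.d β
    have hM : M ≤ l := sup_le hαl hβl
    have hmem : (M - Λ.d α, M - Λ.d β) ∈ (Finset.Iic l).offDiag := Finset.mem_offDiag.2
      ⟨Finset.mem_Iic.2 (tsub_le_self.trans hM), Finset.mem_Iic.2 (tsub_le_self.trans hM),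
        fun h => hd ((tsub_right_inj le_sup_left le_sup_right).1 h)⟩
    exact hsep _ hmem ((segmentsAgree_of_isSegment_comp hα hβ hA hB (hM.trans hl)).mono
      (tsub_le_tsub_left hM _))

end Paper
end

section
/- Let Λ be a row-finite k-graph with no sources which is not cofinal. Then there exist a vertex v ∈ Λ^0 and an infinite path x ∈ Λ^∞ such that vΛx(n) = ∅ for all n ∈ ℕ^k, i.e., no finite path leads from any vertex on x to v. -/
namespace Paper


variable {k : ℕ} {Obj Hom : Type}

/-!
Failure of cofinality gives vertices `v`, `w` such that `w` receives paths of every degree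
whose sources cannot reach `v`, and the set `U` of vertices that cannot reach `v` is closed
under passing from the source of a path to its range. Row-finiteness and König's lemma extend
the diagonal paths into a chain `λ₀ ⊑ λ₁ ⊑ ⋯` of prefixes with `d λₘ = (m, …, m)` and sources
in `U`; the prefixes of degree `q` of the `λₘ` are coherent and define an infinite path `x`
with `x(q) ∈ U` for all `q`.
-/

theorem _root_.Set.Finite.exists_mem_forall_of_antitone {α : Type*} {E : Set α}
    (hE : E.Finite) {Q : α → ℕ → Prop} (hQ : ∀ e, Antitone (Q e))
    (h : ∀ N, ∃ e ∈ E, Q e N) : ∃ e ∈ E, ∀ N, Q e N := by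
  by_contra! hcon
  have hev : ∀ᶠ N in Filter.atTop, ∀ e ∈ E, ¬ Q e N := by
    refine (Filter.eventually_all_finite hE).2 fun e he => ?_
    obtain ⟨N, hN⟩ := hcon e he
    exact Filter.eventually_atTop.2 ⟨N, fun M hM hQM => hN (hQ e hM hQM)⟩
  obtain ⟨N, hN⟩ := hev.exists
  obtain ⟨e, he, hQe⟩ := h N
  exact hN e he hQe

namespace KGraph

variable (Λ : KGraph k Obj Hom)

/-- The paper's `uΛ^n`. -/
def pathsOfDegree (u : Obj) (n : Fin k → ℕ) : Set Hom :=
  {lam | Λ.rng lam = u ∧ Λ.d lam = n}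

/-- The paper's `vΛz ≠ ∅`. -/
def HasPath (v z : Obj) : Prop :=
  ∃ μ : Hom, Λ.rng μ = v ∧ Λ.src μ = z

def IsPrefix (μ lam : Hom) : Prop :=
  ∃ t : Hom, Λ.src μ = Λ.rng t ∧ Λ.comp μ t = lam

variable {Λ}

theorem HasPath.trans {u v z : Obj} (huv : Λ.HasPath u v) (hvz : Λ.HasPath v z) :
    Λ.HasPath u z := by
  obtain ⟨μ, rfl, rfl⟩ := huv
  obtain ⟨ν, hν, rfl⟩ := hvz
  exact ⟨Λ.comp μ ν, Λ.rng_comp μ ν hν.symm, Λ.src_comp μ ν hν.symm⟩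

theorem eq_and_eq_of_comp_eq {μ t μ' t' : Hom} (h : Λ.src μ = Λ.rng t)
    (h' : Λ.src μ' = Λ.rng t') (hcomp : Λ.comp μ t = Λ.comp μ' t') (hd : Λ.d μ = Λ.d μ') :
    μ = μ' ∧ t = t' := by
  have hdt : Λ.d t = Λ.d t' := by
    apply add_left_cancel (a := Λ.d μ)
    rw [← Λ.d_comp μ t h, hcomp, Λ.d_comp μ' t' h', hd]
  have huniq := Λ.factor (Λ.comp μ t) (Λ.d μ) (Λ.d t) (Λ.d_comp μ t h)
  exact Prod.ext_iff.1 <| huniq.unique (y₁ := (μ, t)) (y₂ := (μ', t'))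
    ⟨h, rfl, rfl, rfl⟩ ⟨h', hcomp.symm, hd.symm, hdt.symm⟩

theorem comp_left_cancel {μ t t' : Hom} (h : Λ.src μ = Λ.rng t) (h' : Λ.src μ = Λ.rng t')
    (hcomp : Λ.comp μ t = Λ.comp μ t') : t = t' :=
  (eq_and_eq_of_comp_eq h h' hcomp rfl).2

theorem eq_idm_of_d_eq_zero {lam : Hom} (h : Λ.d lam = 0) : lam = Λ.idm (Λ.rng lam) :=
  (eq_and_eq_of_comp_eq (Λ.rng_idm _).symm (Λ.src_idm _)
    ((Λ.comp_idm lam).trans (Λ.idm_comp lam).symm) (h.trans (Λ.d_idm _).symm)).1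

theorem IsPrefix.refl (μ : Hom) : Λ.IsPrefix μ μ :=
  ⟨Λ.idm (Λ.src μ), (Λ.rng_idm _).symm, Λ.comp_idm μ⟩

theorem IsPrefix.trans {μ lam ν : Hom} (h₁ : Λ.IsPrefix μ lam) (h₂ : Λ.IsPrefix lam ν) :
    Λ.IsPrefix μ ν := by
  obtain ⟨t, ht, rfl⟩ := h₁
  obtain ⟨s, hs, rfl⟩ := h₂
  rw [Λ.src_comp μ t ht] at hs
  exact ⟨Λ.comp t s, by rw [Λ.rng_comp t s hs, ht], (Λ.comp_assoc μ t s ht hs).symm⟩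

theorem IsPrefix.rng_eq {μ lam : Hom} (h : Λ.IsPrefix μ lam) : Λ.rng μ = Λ.rng lam := by
  obtain ⟨t, ht, rfl⟩ := h
  exact (Λ.rng_comp μ t ht).symm

theorem IsPrefix.hasPath_src {μ lam : Hom} (h : Λ.IsPrefix μ lam) :
    Λ.HasPath (Λ.src μ) (Λ.src lam) := by
  obtain ⟨t, ht, rfl⟩ := h
  exact ⟨t, ht.symm, (Λ.src_comp μ t ht).symm⟩

theorem IsPrefix.eq_of_d_eq {μ μ' lam : Hom} (h : Λ.IsPrefix μ lam) (h' : Λ.IsPrefix μ' lam)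
    (hd : Λ.d μ = Λ.d μ') : μ = μ' := by
  obtain ⟨t, ht, rfl⟩ := h
  obtain ⟨t', ht', hcomp⟩ := h'
  exact (eq_and_eq_of_comp_eq ht ht' hcomp.symm hd).1

theorem exists_isPrefix_d_eq {lam : Hom} {p : Fin k → ℕ} (hp : p ≤ Λ.d lam) :
    ∃ μ, Λ.IsPrefix μ lam ∧ Λ.d μ = p := by
  obtain ⟨⟨μ, t⟩, ⟨ht, hcomp, hdμ, -⟩, -⟩ :=
    Λ.factor lam p (Λ.d lam - p) (add_tsub_cancel_of_le hp).symm
  exact ⟨μ, ⟨t, ht, hcomp⟩, hdμ⟩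

theorem IsPrefix.isPrefix_of_d_le {μ μ' lam : Hom} (h : Λ.IsPrefix μ lam)
    (h' : Λ.IsPrefix μ' lam) (hd : Λ.d μ ≤ Λ.d μ') : Λ.IsPrefix μ μ' := by
  obtain ⟨a, ha, hda⟩ := exists_isPrefix_d_eq hd
  rwa [(ha.trans h').eq_of_d_eq h hda] at ha

noncomputable def IsPrefix.suffix {μ lam : Hom} (h : Λ.IsPrefix μ lam) : Hom :=
  h.choose

theorem IsPrefix.src_eq_rng_suffix {μ lam : Hom} (h : Λ.IsPrefix μ lam) :
    Λ.src μ = Λ.rng h.suffix :=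
  h.choose_spec.1

theorem IsPrefix.comp_suffix {μ lam : Hom} (h : Λ.IsPrefix μ lam) :
    Λ.comp μ h.suffix = lam :=
  h.choose_spec.2

theorem IsPrefix.src_suffix {μ lam : Hom} (h : Λ.IsPrefix μ lam) :
    Λ.src h.suffix = Λ.src lam := by
  conv_rhs => rw [← h.comp_suffix]
  exact (Λ.src_comp _ _ h.src_eq_rng_suffix).symm

theorem IsPrefix.d_suffix {μ lam : Hom} (h : Λ.IsPrefix μ lam) :
    Λ.d h.suffix = Λ.d lam - Λ.d μ := by
  refine eq_tsub_of_add_eq ?_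
  rw [add_comm, ← Λ.d_comp _ _ h.src_eq_rng_suffix, h.comp_suffix]

theorem isPrefix_of_le {P : ℕ → Hom} (hP : ∀ m, Λ.IsPrefix (P m) (P (m + 1))) {m m' : ℕ}
    (h : m ≤ m') : Λ.IsPrefix (P m) (P m') := by
  induction m', h using Nat.le_induction with
  | base => exact .refl _
  | succ n _ ih => exact ih.trans (hP n)

theorem finite_pathsOfDegree_add {m n : Fin k → ℕ} (hm : ∀ u, (Λ.pathsOfDegree u m).Finite)
    (hn : ∀ u, (Λ.pathsOfDegree u n).Finite) (u : Obj) :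
    (Λ.pathsOfDegree u (m + n)).Finite := by
  refine ((hm u).biUnion fun a _ => (hn (Λ.src a)).image (Λ.comp a)).subset ?_
  rintro lam ⟨hr, hd⟩
  obtain ⟨⟨a, b⟩, ⟨hab, rfl, hda, hdb⟩, -⟩ := Λ.factor lam m n hd
  exact Set.mem_biUnion (x := a) ⟨(Λ.rng_comp a b hab).symm.trans hr, hda⟩
    ⟨b, ⟨hab.symm, hdb⟩, rfl⟩

end KGraph

theorem RowFinite.finite_pathsOfDegree {Λ : KGraph k Obj Hom} (hRF : RowFinite Λ) (u : Obj)
    (n : Fin k → ℕ) : (Λ.pathsOfDegree u n).Finite := by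
  let S : AddSubmonoid (Fin k → ℕ) :=
    { carrier := {n | ∀ u, (Λ.pathsOfDegree u n).Finite}
      zero_mem' := fun u => (Set.finite_singleton (Λ.idm u)).subset fun lam ⟨hr, hd⟩ => by
        rw [Set.mem_singleton_iff, KGraph.eq_idm_of_d_eq_zero hd, hr]
      add_mem' := fun hm hn => KGraph.finite_pathsOfDegree_add hm hn }
  have hn : n ∈ S := by
    rw [← Finset.univ_sum_single n]
    refine sum_mem fun i _ => ?_
    have hsingle : Pi.single i 1 ∈ S := fun u => hRF u i
    simpa [← Pi.single_smul'] using nsmul_mem hsingle (n i)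
  exact hn u

noncomputable def InfPath.ofPrefixes (Λ : KGraph k Obj Hom) (pre : (Fin k → ℕ) → Hom)
    (hd : ∀ q, Λ.d (pre q) = q) (hpre : ∀ p q, p ≤ q → Λ.IsPrefix (pre p) (pre q)) :
    InfPath Λ where
  vert q := Λ.src (pre q)
  seg p q h := (hpre p q h).suffix
  rng_seg p q h := (hpre p q h).src_eq_rng_suffix.symm
  src_seg p q h := (hpre p q h).src_suffix
  d_seg p q h := by rw [(hpre p q h).d_suffix, hd, hd]
  comp_seg p q r h₁ h₂ := by
    have hpq := hpre p q h₁
    have hqr := hpre q r h₂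
    have hmid : Λ.src hpq.suffix = Λ.rng hqr.suffix :=
      hpq.src_suffix.trans hqr.src_eq_rng_suffix
    refine KGraph.comp_left_cancel ?_ (hpre p r (h₁.trans h₂)).src_eq_rng_suffix ?_
    · rw [Λ.rng_comp _ _ hmid]
      exact hpq.src_eq_rng_suffix
    · rw [← Λ.comp_assoc _ _ _ hpq.src_eq_rng_suffix hmid, hpq.comp_suffix, hqr.comp_suffix,
        (hpre p r (h₁.trans h₂)).comp_suffix]

namespace KGraph

variable {Λ : KGraph k Obj Hom}

theorem exists_infPath_of_isPrefix_chain (P : ℕ → Hom)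
    (hP : ∀ m, Λ.IsPrefix (P m) (P (m + 1))) (hunbdd : ∀ q, ∃ m, q ≤ Λ.d (P m)) :
    ∃ x : InfPath Λ, ∀ q, ∃ m, Λ.HasPath (x.vert q) (Λ.src (P m)) := by
  choose M hM using hunbdd
  choose pre hpre hdpre using fun q => exists_isPrefix_d_eq (hM q)
  have hcoh : ∀ p q, p ≤ q → Λ.IsPrefix (pre p) (pre q) := fun p q hpq =>
    ((hpre p).trans (isPrefix_of_le hP (le_max_left (M p) (M q)))).isPrefix_of_d_le
      ((hpre q).trans (isPrefix_of_le hP (le_max_right (M p) (M q))))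
      (by rw [hdpre, hdpre]; exact hpq)
  exact ⟨InfPath.ofPrefixes Λ pre hdpre hcoh, fun q => ⟨M q, (hpre q).hasPath_src⟩⟩

variable (Λ) in
def HasDiagPathsFrom (U : Set Obj) (u : Obj) : Prop :=
  ∀ N : ℕ, ∃ lam, Λ.rng lam = u ∧ Λ.d lam = (fun _ => N) ∧ Λ.src lam ∈ U

variable {U : Set Obj}

theorem HasDiagPathsFrom.mem (hU : ∀ u z, Λ.HasPath u z → z ∈ U → u ∈ U)
    {u : Obj} (h : Λ.HasDiagPathsFrom U u) : u ∈ U := by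
  obtain ⟨lam, rfl, -, hsrc⟩ := h 0
  exact hU _ _ ⟨lam, rfl, rfl⟩ hsrc

/-- König's lemma, using that `uΛ^(1, …, 1)` is finite. -/
theorem HasDiagPathsFrom.exists_edge (hU : ∀ u z, Λ.HasPath u z → z ∈ U → u ∈ U)
    (hRF : RowFinite Λ) {u : Obj} (h : Λ.HasDiagPathsFrom U u) :
    ∃ e, Λ.rng e = u ∧ Λ.d e = (fun _ => 1) ∧ Λ.HasDiagPathsFrom U (Λ.src e) := by
  let Q : Hom → ℕ → Prop := fun e N =>
    ∃ b, Λ.rng b = Λ.src e ∧ Λ.d b = (fun _ => N) ∧ Λ.src b ∈ U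
  have hsplit : ∀ N, ∃ e ∈ Λ.pathsOfDegree u (fun _ => 1), Q e N := by
    intro N
    obtain ⟨lam, hr, hd, hs⟩ := h (N + 1)
    obtain ⟨⟨e, b⟩, ⟨heb, rfl, hde, hdb⟩, -⟩ :=
      Λ.factor lam (fun _ => 1) (fun _ => N) (by rw [hd]; funext; exact Nat.add_comm N 1)
    refine ⟨e, ⟨(Λ.rng_comp e b heb).symm.trans hr, hde⟩, b, heb.symm, hdb, ?_⟩
    rwa [Λ.src_comp e b heb] at hs
  have hanti : ∀ e, Antitone (Q e) := by
    rintro e M N hMN ⟨b, hb, hdb, hsb⟩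
    obtain ⟨a, ha, hda⟩ := exists_isPrefix_d_eq (lam := b) (p := fun _ => M)
      (by rw [hdb]; exact fun _ => hMN)
    exact ⟨a, ha.rng_eq.trans hb, hda, hU _ _ ha.hasPath_src hsb⟩
  obtain ⟨e, ⟨hre, hde⟩, he⟩ :=
    (hRF.finite_pathsOfDegree u _).exists_mem_forall_of_antitone hanti hsplit
  exact ⟨e, hre, hde, he⟩

theorem HasDiagPathsFrom.exists_isPrefix_chain (hU : ∀ u z, Λ.HasPath u z → z ∈ U → u ∈ U)
    (hRF : RowFinite Λ) {w : Obj} (hw : Λ.HasDiagPathsFrom U w) :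
    ∃ P : ℕ → Hom, (∀ m, Λ.IsPrefix (P m) (P (m + 1))) ∧ (∀ m, Λ.d (P m) = fun _ => m) ∧
      ∀ m, Λ.src (P m) ∈ U := by
  have hext : ∀ lam : {lam // Λ.HasDiagPathsFrom U (Λ.src lam)},
      ∃ lam' : {lam // Λ.HasDiagPathsFrom U (Λ.src lam)},
        Λ.IsPrefix lam lam' ∧ Λ.d lam' = Λ.d lam + fun _ => 1 := by
    rintro ⟨lam, hlam⟩
    obtain ⟨e, hre, hde, he⟩ := hlam.exists_edge hU hRF
    exact ⟨⟨Λ.comp lam e, by rwa [Λ.src_comp lam e hre.symm]⟩, ⟨e, hre.symm, rfl⟩,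
      by rw [Λ.d_comp lam e hre.symm, hde]⟩
  choose next hnext hdnext using hext
  let P : ℕ → Hom := fun m => (next^[m] ⟨Λ.idm w, by rwa [Λ.src_idm]⟩).1
  refine ⟨P, fun m => ?_, fun m => ?_, fun m => (next^[m] _).2.mem hU⟩
  · simp only [P, Function.iterate_succ_apply']
    exact hnext _
  · induction m with
    | zero => exact Λ.d_idm w
    | succ m ih =>
      simp only [P, Function.iterate_succ_apply'] at ih ⊢
      rw [hdnext, ih]
      rfl

theorem HasDiagPathsFrom.exists_infPath (hU : ∀ u z, Λ.HasPath u z → z ∈ U → u ∈ U)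
    (hRF : RowFinite Λ) {w : Obj} (hw : Λ.HasDiagPathsFrom U w) :
    ∃ x : InfPath Λ, ∀ q, x.vert q ∈ U := by
  obtain ⟨P, hP, hdP, hPU⟩ := hw.exists_isPrefix_chain hU hRF
  have hunbdd : ∀ q, ∃ m, q ≤ Λ.d (P m) := fun q =>
    ⟨Finset.univ.sup q, fun i => by rw [hdP]; exact Finset.le_sup (Finset.mem_univ i)⟩
  obtain ⟨x, hx⟩ := exists_infPath_of_isPrefix_chain P hP hunbdd
  refine ⟨x, fun q => ?_⟩
  obtain ⟨m, hm⟩ := hx q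
  exact hU _ _ hm (hPU m)

end KGraph

theorem not_cofinal_gives_unreachable_infinite_path_general {k : ℕ} {Obj Hom : Type}
    (Λ : KGraph k Obj Hom) (hRF : RowFinite Λ)
    (hnc : ¬ Cofinal Λ) :
    ∃ (v : Obj) (x : InfPath Λ), ∀ (n : Fin k → ℕ) (μ : Hom),
      Λ.rng μ = v → Λ.src μ ≠ x.vert n := by
  obtain ⟨v, w, hvw⟩ : ∃ v w, ∀ n : Fin k → ℕ, ∃ lam, Λ.rng lam = w ∧ Λ.d lam = n ∧
      ¬ Λ.HasPath v (Λ.src lam) := by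
    simpa [Cofinal, KGraph.HasPath] using hnc
  let U : Set Obj := {z | ¬ Λ.HasPath v z}
  have hU : ∀ u z, Λ.HasPath u z → z ∈ U → u ∈ U := fun u z huz hz hvu => hz (hvu.trans huz)
  obtain ⟨x, hx⟩ := KGraph.HasDiagPathsFrom.exists_infPath hU hRF (fun N => hvw _)
  exact ⟨v, x, fun n μ hμ hsrc => hx n ⟨μ, hμ, hsrc⟩⟩

/-- A row-finite `k`-graph with no sources which is not cofinal admits a vertex
`v` and an infinite path `x` with `vΛx(n) = ∅` for all `n ∈ ℕ^k`. -/
theorem not_cofinal_gives_unreachable_infinite_path {k : ℕ} {Obj Hom : Type}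
    (Λ : KGraph k Obj Hom) (hRF : RowFinite Λ) (hNS : NoSources Λ)
    (hnc : ¬ Cofinal Λ) :
    ∃ (v : Obj) (x : InfPath Λ), ∀ (n : Fin k → ℕ) (μ : Hom),
      Λ.rng μ = v → Λ.src μ ≠ x.vert n :=
  not_cofinal_gives_unreachable_infinite_path_general Λ hRF hnc

end Paper
end
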